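/- arXiv:0905.1961 — 2 statements merged into one kernel-verified Lean document; each statement's English description precedes it below -/
import Mathlib

section
/- Let d ≥ 1 and let L be a finite abstract simplicial complex of dimension 2d satisfying f_L(-1/2) = 0, and write h_L(t) = (1+t) · h̃_L(t). Then h̃_L(-1) = 2^{2d-1} · Σ_{v ∈ V(L)} f_{Lk_L(v)}(-1/2), where the sum runs over all vertices v of L. -/
/-!
Since `h_L = (1 + t) h̃_L`, the value `h̃_L(-1)` is `h_L'(-1)`. Termwise,
`h_L(t) = (1 - t)^n f_L(t / (1 - t))`, which gives
`h_L'(-1) = 2^(n-2) f_L'(-1/2) - n 2^(n-1) f_L(-1/2)`, and the last term vanishes by hypothesis.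
Finally `f_L' = Σ_v f_{Lk_L(v)}`: differentiating `t^|τ|` deletes one of the `|τ|` vertices of `τ`,
and the faces `τ ∖ {v}` with `v ∈ τ` are exactly the faces of the link of `v`.
-/

open Polynomial

/-- A finite abstract simplicial complex on the vertex type `V`: a nonempty
finite collection of finite subsets of `V` closed under taking subsets. -/
def IsSimplicialComplex {V : Type*} [DecidableEq V] (L : Finset (Finset V)) : Prop :=
  L.Nonempty ∧ ∀ σ ∈ L, ∀ τ ⊆ σ, τ ∈ L

/-- The f-polynomial `f_L(t) = Σ_{σ ∈ L} t^{|σ|}`. -/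
noncomputable def fPoly {V : Type*} [DecidableEq V] (L : Finset (Finset V)) : ℝ[X] :=
  ∑ σ ∈ L, X ^ σ.card

/-- The h-polynomial (with parameter `n`, for a complex of dimension `n - 1`):
`h_L(t) = Σ_{σ ∈ L} t^{|σ|} (1 - t)^{n - |σ|}`. -/
noncomputable def hPoly {V : Type*} [DecidableEq V] (n : ℕ) (L : Finset (Finset V)) : ℝ[X] :=
  ∑ σ ∈ L, X ^ σ.card * (1 - X) ^ (n - σ.card)

/-- The link of a vertex `v`: `Lk_L(v) = { σ ∈ L : v ∉ σ and σ ∪ {v} ∈ L }`. -/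
def link {V : Type*} [DecidableEq V] (L : Finset (Finset V)) (v : V) : Finset (Finset V) :=
  L.filter (fun σ => v ∉ σ ∧ insert v σ ∈ L)

/-- The set of vertices of `L`: all `v` with `{v} ∈ L`. -/
def verts {V : Type*} [DecidableEq V] (L : Finset (Finset V)) : Finset V :=
  (L.sup id).filter (fun v => ({v} : Finset V) ∈ L)

namespace Polynomial

theorem eval_neg_one_derivative_one_add_X_mul {R : Type*} [CommRing R] (q : R[X]) :
    (derivative ((1 + X) * q)).eval (-1) = q.eval (-1) := by
  simp [derivative_mul]

theorem eval_neg_one_derivative_X_pow_mul_one_sub_X_pow (p k m : ℕ) (hkm : k + m = p + 2) :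
    (derivative (X ^ k * (1 - X) ^ m : ℝ[X])).eval (-1)
      = 2 ^ p * (k * (-1 / 2) ^ (k - 1)) - (p + 2) * 2 ^ (p + 1) * (-1 / 2) ^ k := by
  simp only [derivative_mul, derivative_pow, derivative_sub, derivative_one, derivative_X,
    eval_add, eval_mul, eval_pow, eval_sub, eval_one, eval_X, eval_C, zero_sub, eval_neg]
  rcases k with _ | j
  · obtain rfl : m = p + 2 := by omega
    push_cast
    ring
  rcases m with _ | i
  · obtain rfl : j = p + 1 := by omega
    simp only [Nat.add_one_sub_one, div_pow, pow_succ]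
    push_cast
    field_simp
    ring
  · obtain rfl : p = j + i := by omega
    simp only [Nat.add_sub_cancel, div_pow, pow_succ, pow_add]
    push_cast
    field_simp
    ring

end Polynomial

section SimplicialComplex

variable {V : Type*} [DecidableEq V] {L : Finset (Finset V)}

theorem mem_verts_of_mem_face (hL : IsSimplicialComplex L) {τ : Finset V} {v : V}
    (hτ : τ ∈ L) (hv : v ∈ τ) : v ∈ verts L :=
  Finset.mem_filter.2
    ⟨Finset.le_sup (f := id) hτ hv, hL.2 τ hτ _ (Finset.singleton_subset_iff.2 hv)⟩

theorem sum_link_eq_sum_erase {M : Type*} [AddCommMonoid M] (hL : IsSimplicialComplex L) (v : V)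
    (f : Finset V → M) :
    ∑ σ ∈ link L v, f σ = ∑ τ ∈ L with v ∈ τ, f (τ.erase v) := by
  symm
  refine Finset.sum_nbij' (·.erase v) (insert v) ?_ ?_ ?_ ?_ (fun _ _ => rfl)
  · intro τ hτ
    simp only [Finset.mem_filter, link] at hτ ⊢
    exact ⟨hL.2 τ hτ.1 _ (Finset.erase_subset _ _), Finset.notMem_erase _ _,
      by rw [Finset.insert_erase hτ.2]; exact hτ.1⟩
  · intro σ hσ
    simp only [Finset.mem_filter, link] at hσ ⊢
    exact ⟨hσ.2.2, Finset.mem_insert_self _ _⟩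
  · intro τ hτ
    simp only [Finset.mem_filter] at hτ
    exact Finset.insert_erase hτ.2
  · intro σ hσ
    simp only [Finset.mem_filter, link] at hσ
    exact Finset.erase_insert hσ.2.1

theorem derivative_fPoly (hL : IsSimplicialComplex L) :
    derivative (fPoly L) = ∑ v ∈ verts L, fPoly (link L v) := calc
  derivative (fPoly L) = ∑ τ ∈ L, ∑ v ∈ τ, X ^ (τ.erase v).card := by
    refine (derivative_sum).trans (Finset.sum_congr rfl fun τ _ => ?_)
    rw [derivative_X_pow, Finset.sum_congr rfl fun v hv => by rw [Finset.card_erase_of_mem hv],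
      Finset.sum_const, nsmul_eq_mul, C_eq_natCast]
  _ = ∑ v ∈ verts L, ∑ τ ∈ L with v ∈ τ, X ^ (τ.erase v).card :=
    Finset.sum_comm' fun τ v => by
      simp only [Finset.mem_filter]
      exact ⟨fun h => ⟨h, mem_verts_of_mem_face hL h.1 h.2⟩, fun h => h.1⟩
  _ = ∑ v ∈ verts L, fPoly (link L v) := by
    simp only [fPoly, sum_link_eq_sum_erase hL]

theorem eval_neg_one_derivative_hPoly (p : ℕ) (hcard : ∀ σ ∈ L, σ.card ≤ p + 2) :
    (derivative (hPoly (p + 2) L)).eval (-1)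
      = 2 ^ p * (derivative (fPoly L)).eval (-1 / 2)
        - (p + 2) * 2 ^ (p + 1) * (fPoly L).eval (-1 / 2) := by
  simp only [hPoly, fPoly, derivative_sum, eval_finsetSum, Finset.mul_sum,
    ← Finset.sum_sub_distrib, derivative_X_pow, eval_mul, eval_C, eval_pow, eval_X]
  refine Finset.sum_congr rfl fun σ hσ => ?_
  rw [eval_neg_one_derivative_X_pow_mul_one_sub_X_pow p _ _ (by have := hcard σ hσ; omega)]

end SimplicialComplex

/-- Let `d ≥ 1` and let `L` be a finite simplicial complex of dimension `2d`
with `f_L(-1/2) = 0`, and write `h_L(t) = (1 + t) · h̃_L(t)`. Then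
`h̃_L(-1) = 2^{2d-1} · Σ_{v ∈ V(L)} f_{Lk_L(v)}(-1/2)`, the sum running over
all vertices of `L`. -/
theorem htilde_eval_neg_one_eq_sum_links {V : Type*} [DecidableEq V] (d : ℕ) (hd : 1 ≤ d)
    (L : Finset (Finset V)) (hL : IsSimplicialComplex L)
    (hdim : (∀ σ ∈ L, σ.card ≤ 2 * d + 1) ∧ ∃ σ ∈ L, σ.card = 2 * d + 1)
    (hf : (fPoly L).eval (-1/2) = 0)
    (htilde : ℝ[X]) (hfac : hPoly (2 * d + 1) L = (1 + X) * htilde) :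
    htilde.eval (-1) = 2 ^ (2 * d - 1) * ∑ v ∈ verts L, (fPoly (link L v)).eval (-1/2) := by
  rw [show 2 * d + 1 = 2 * d - 1 + 2 by omega] at hfac hdim
  generalize 2 * d - 1 = p at hfac hdim ⊢
  calc htilde.eval (-1) = (derivative (hPoly (p + 2) L)).eval (-1) := by
        rw [hfac, eval_neg_one_derivative_one_add_X_mul]
    _ = 2 ^ p * (derivative (fPoly L)).eval (-1 / 2)
          - (p + 2) * 2 ^ (p + 1) * (fPoly L).eval (-1 / 2) :=
        eval_neg_one_derivative_hPoly p hdim.1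
    _ = 2 ^ p * ∑ v ∈ verts L, (fPoly (link L v)).eval (-1/2) := by
        rw [hf, derivative_fPoly hL, eval_finsetSum, mul_zero, sub_zero]
end

section
/- Let d ≥ 1 and let L be a finite abstract simplicial complex of dimension 2d with f_L(-1/2) = 0 and h_L(t) = (1+t) · h̃_L(t), and assume moreover that the link of every vertex of L has dimension exactly 2d-1. Then 2 · h̃_L(-1) = Σ_{v ∈ V(L)} h_{Lk_L(v)}(-1), where for each vertex v the h-polynomial of the link is computed with parameter n = 2d. In particular (-1)^d h̃_L(-1) = (1/2) Σ_{v} (-1)^d h_{Lk_L(v)}(-1). -/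
open Polynomial

/-!
Write `h_L(t) = Σ_σ t^|σ| (1-t)^(n-|σ|)`. Termwise, `n h_L + (1 - t) h_L'` equals
`Σ_σ |σ| t^(|σ|-1) (1-t)^(n-|σ|)`, the `h`-analogue of `f_L'(t) = Σ_σ |σ| t^(|σ|-1)`. Counting the
pairs `v ∈ σ` through `σ = {v} ∪ ρ` with `ρ ∈ Lk_L(v)` identifies this sum with
`Σ_v h_{Lk_L(v)}(t)`, the links taken with parameter `n - 1`. At `t = -1` the factorisation
`h_L = (1 + t) h̃_L` gives `h_L(-1) = 0` and `h_L'(-1) = h̃_L(-1)`.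
-/

open Finset

/-- For `a = 0` both sides vanish, so the truncated `a - 1` is harmless. -/
theorem one_sub_X_mul_derivative_X_pow_mul_one_sub_X_pow {R : Type*} [CommRing R] (a b : ℕ) :
    (1 - X) * derivative (X ^ a * (1 - X) ^ b : R[X])
      = (a : R[X]) * X ^ (a - 1) * (1 - X) ^ b - ((a + b : ℕ) : R[X]) * (X ^ a * (1 - X) ^ b) := by
  rcases a with _ | a <;> rcases b with _ | b <;> simp [derivative_mul, derivative_pow] <;> ring

section Links

variable {V : Type*} [DecidableEq V] {L : Finset (Finset V)}

theorem sum_link_insert {M : Type*} [AddCommMonoid M] (hL : IsSimplicialComplex L) (v : V)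
    (F : Finset V → M) :
    ∑ σ ∈ link L v, F (insert v σ) = ∑ τ ∈ L with v ∈ τ, F τ := by
  refine sum_nbij' (insert v) (fun τ => τ.erase v) ?_ ?_ ?_ ?_ fun _ _ => rfl
  · intro σ hσ
    simp only [link, mem_filter] at hσ ⊢
    exact ⟨hσ.2.2, mem_insert_self v σ⟩
  · intro τ hτ
    simp only [link, mem_filter] at hτ ⊢
    exact ⟨hL.2 τ hτ.1 _ (erase_subset v τ), notMem_erase v τ,
      by rw [insert_erase hτ.2]; exact hτ.1⟩
  · intro σ hσ
    exact erase_insert (mem_filter.1 hσ).2.1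
  · intro τ hτ
    exact insert_erase (mem_filter.1 hτ).2

theorem sum_verts_sum_link_insert {M : Type*} [AddCommMonoid M] (hL : IsSimplicialComplex L)
    (F : Finset V → M) :
    ∑ v ∈ verts L, ∑ σ ∈ link L v, F (insert v σ) = ∑ τ ∈ L, τ.card • F τ := by
  simp_rw [sum_link_insert hL, ← sum_const]
  refine sum_comm' fun v τ => ?_
  simp only [verts, mem_filter, mem_sup, id]
  exact ⟨fun h => ⟨h.2.2, h.2.1⟩, fun h => ⟨⟨⟨τ, h.2, h.1⟩,
    hL.2 τ h.2 _ (singleton_subset_iff.2 h.1)⟩, h.2, h.1⟩⟩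

theorem sum_hPoly_link (hL : IsSimplicialComplex L) {n : ℕ} (hdim : ∀ σ ∈ L, σ.card ≤ n + 1) :
    ∑ v ∈ verts L, hPoly n (link L v)
      = ((n + 1 : ℕ) : ℝ[X]) * hPoly (n + 1) L + (1 - X) * derivative (hPoly (n + 1) L) := by
  calc ∑ v ∈ verts L, hPoly n (link L v)
      = ∑ v ∈ verts L, ∑ σ ∈ link L v, (fun τ : Finset V =>
          X ^ (τ.card - 1) * (1 - X) ^ (n + 1 - τ.card)) (insert v σ) := by
        refine sum_congr rfl fun v _ => sum_congr rfl fun σ hσ => ?_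
        simp [card_insert_of_notMem (mem_filter.1 hσ).2.1]
    _ = ∑ τ ∈ L, τ.card • (X ^ (τ.card - 1) * (1 - X) ^ (n + 1 - τ.card)) :=
        sum_verts_sum_link_insert hL fun τ => X ^ (τ.card - 1) * (1 - X) ^ (n + 1 - τ.card)
    _ = _ := by
      rw [hPoly, derivative_sum, mul_sum, mul_sum, ← sum_add_distrib]
      refine sum_congr rfl fun σ hσ => ?_
      obtain ⟨b, hb⟩ := Nat.exists_eq_add_of_le (hdim σ hσ)
      rw [hb, Nat.add_sub_cancel_left, one_sub_X_mul_derivative_X_pow_mul_one_sub_X_pow,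
        nsmul_eq_mul]
      ring

end Links

theorem two_htilde_eq_sum_links_general {V : Type*} [DecidableEq V] (d : ℕ)
    (L : Finset (Finset V)) (hL : IsSimplicialComplex L)
    (hdim : (∀ σ ∈ L, σ.card ≤ 2 * d + 1) ∧ ∃ σ ∈ L, σ.card = 2 * d + 1)
    (htilde : ℝ[X]) (hfac : hPoly (2 * d + 1) L = (1 + X) * htilde) :
    2 * htilde.eval (-1) = ∑ v ∈ verts L, (hPoly (2 * d) (link L v)).eval (-1) ∧
      (-1 : ℝ) ^ d * htilde.eval (-1) =
        (1 / 2) * ∑ v ∈ verts L, (-1 : ℝ) ^ d * (hPoly (2 * d) (link L v)).eval (-1) := by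
  have hroot : (hPoly (2 * d + 1) L).eval (-1) = 0 := by simp [hfac]
  have hderiv : (derivative (hPoly (2 * d + 1) L)).eval (-1) = htilde.eval (-1) := by
    simp [hfac, derivative_mul]
  have hsum : 2 * htilde.eval (-1) = ∑ v ∈ verts L, (hPoly (2 * d) (link L v)).eval (-1) := by
    rw [← eval_finsetSum, sum_hPoly_link hL hdim.1]
    simp only [eval_add, eval_mul, eval_sub, eval_one, eval_X, hroot, hderiv]
    ring
  refine ⟨hsum, ?_⟩
  rw [← mul_sum]
  linear_combination (-1 : ℝ) ^ d / 2 * hsum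

/-- Let `d ≥ 1` and let `L` be a finite simplicial complex of dimension `2d`
with `f_L(-1/2) = 0`, `h_L(t) = (1 + t) · h̃_L(t)`, and assume the link of every
vertex of `L` has dimension exactly `2d - 1`. Then
`2 · h̃_L(-1) = Σ_{v ∈ V(L)} h_{Lk_L(v)}(-1)` (each link's h-polynomial computed
with parameter `n = 2d`); in particular
`(-1)^d h̃_L(-1) = (1/2) Σ_v (-1)^d h_{Lk_L(v)}(-1)`. -/
theorem two_htilde_eq_sum_links {V : Type*} [DecidableEq V] (d : ℕ) (hd : 1 ≤ d)
    (L : Finset (Finset V)) (hL : IsSimplicialComplex L)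
    (hdim : (∀ σ ∈ L, σ.card ≤ 2 * d + 1) ∧ ∃ σ ∈ L, σ.card = 2 * d + 1)
    (hf : (fPoly L).eval (-1/2) = 0)
    (htilde : ℝ[X]) (hfac : hPoly (2 * d + 1) L = (1 + X) * htilde)
    (hlinkdim : ∀ v ∈ verts L,
      (∀ σ ∈ link L v, σ.card ≤ 2 * d) ∧ ∃ σ ∈ link L v, σ.card = 2 * d) :
    2 * htilde.eval (-1) = ∑ v ∈ verts L, (hPoly (2 * d) (link L v)).eval (-1) ∧
      (-1 : ℝ) ^ d * htilde.eval (-1) =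
        (1 / 2) * ∑ v ∈ verts L, (-1 : ℝ) ^ d * (hPoly (2 * d) (link L v)).eval (-1) :=
  two_htilde_eq_sum_links_general d L hL hdim htilde hfac
end
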